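/- Let N be a finite-index normal subgroup of a group G acting by ring automorphisms on a ring R, and suppose every ideal of R contains a finite product of primes containing it. Then every G-prime ideal of R equals ⋂_{x ∈ G/N} x•Q for some N-prime ideal Q of R, and conversely every such finite intersection over a G-orbit of an N-prime is G-prime. Consequently, the set of N-primes of R is finite if and only if the set of G-primes of R is finite. -/

import Mathlib

open Pointwise

/-- A two-sided ideal of a (possibly noncommutative) ring, as a subset. -/
structure IsTwoSidedIdealSet (R : Type*) [Ring R] (I : Set R) : Prop where
  zero_mem : (0 : R) ∈ I
  add_mem : ∀ ⦃a b : R⦄, a ∈ I → b ∈ I → a + b ∈ I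
  neg_mem : ∀ ⦃a : R⦄, a ∈ I → -a ∈ I
  mul_mem_left : ∀ (r : R) ⦃a : R⦄, a ∈ I → r * a ∈ I
  mul_mem_right : ∀ (r : R) ⦃a : R⦄, a ∈ I → a * r ∈ I

/-- A prime two-sided ideal: proper, and `A*B ⊆ P` for two-sided ideals `A, B`
implies `A ⊆ P` or `B ⊆ P`.  (Note `A*B ⊆ P` is equivalent to
`∀ a ∈ A, ∀ b ∈ B, a*b ∈ P` since `P` is closed under addition.) -/
def IsPrimeTI (R : Type*) [Ring R] (P : Set R) : Prop :=
  IsTwoSidedIdealSet R P ∧ P ≠ Set.univ ∧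
    ∀ A B : Set R, IsTwoSidedIdealSet R A → IsTwoSidedIdealSet R B →
      (∀ a ∈ A, ∀ b ∈ B, a * b ∈ P) → A ⊆ P ∨ B ⊆ P

/-- A `G`-prime ideal: a proper `G`-stable two-sided ideal `I` such that
`A*B ⊆ I` for `G`-stable two-sided ideals `A, B` implies `A ⊆ I` or `B ⊆ I`. -/
def IsGPrime (G R : Type*) [Group G] [Ring R] [MulSemiringAction G R] (I : Set R) : Prop :=
  IsTwoSidedIdealSet R I ∧ I ≠ Set.univ ∧ (∀ g : G, g • I = I) ∧
    ∀ A B : Set R, IsTwoSidedIdealSet R A → IsTwoSidedIdealSet R B →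
      (∀ g : G, g • A = A) → (∀ g : G, g • B = B) →
      (∀ a ∈ A, ∀ b ∈ B, a * b ∈ I) → A ⊆ I ∨ B ⊆ I


/-- An `N`-prime ideal for a subgroup `N ≤ G`: a proper `N`-stable two-sided
ideal `I` such that `A*B ⊆ I` for `N`-stable two-sided ideals `A, B` implies
`A ⊆ I` or `B ⊆ I`. -/
def IsSubgroupPrime {G : Type*} (R : Type*) [Group G] [Ring R] [MulSemiringAction G R]
    (N : Subgroup G) (I : Set R) : Prop :=
  IsTwoSidedIdealSet R I ∧ I ≠ Set.univ ∧ (∀ g ∈ N, g • I = I) ∧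
    ∀ A B : Set R, IsTwoSidedIdealSet R A → IsTwoSidedIdealSet R B →
      (∀ g ∈ N, g • A = A) → (∀ g ∈ N, g • B = B) →
      (∀ a ∈ A, ∀ b ∈ B, a * b ∈ I) → A ⊆ I ∨ B ⊆ I

/-!
A `G`-prime `I` contains a product of primes `P_i ⊇ I`. The `G`-stable cores of the `N`-stable
cores of the `P_i` are `G`-stable ideals whose product still lies in `I`, so one of them lies in
`I`; hence `I` is the `G`-stable core `⋂ g, g • Q` of the `N`-prime `Q = ⋂ n ∈ N, n • P_i`.
Conversely `⋂ g, g • Q` is `G`-prime for every `N`-prime `Q`, since `G`-stable ideals are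
`N`-stable.

As `N` has finite index, `⋂ g, g • Q₀` is a finite intersection of `N`-stable ideals, so an
`N`-prime containing it contains some `g • Q₀`. If `N`-primes `Q₀, Q` have the same `G`-core we
get `g • Q₀ ⊆ Q` and `g' • Q ⊆ Q₀`; then `k = g' * g` maps `Q₀` into itself while
`k ^ [G : N] ∈ N` fixes it, so all these inclusions are equalities. Hence the fibres of
`Q ↦ ⋂ g, g • Q` are finite `G`-orbits.
-/

open MulAction

section Action

variable {G α : Type*} [Group G] [MulAction G α]

/-- The largest `H`-stable subset of `s`. -/
def stableCore (H : Subgroup G) (s : Set α) : Set α := ⋂ h : H, (h : G) • s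

theorem stableCore_subset (H : Subgroup G) (s : Set α) : stableCore H s ⊆ s :=
  (Set.iInter_subset _ 1).trans (one_smul G s).subset

theorem subset_stableCore {H : Subgroup G} {s t : Set α} (ht : ∀ g ∈ H, g • t = t)
    (hts : t ⊆ s) : t ⊆ stableCore H s :=
  Set.subset_iInter fun h => (ht h h.2).symm.subset.trans (Set.smul_set_mono hts)

theorem smul_stableCore {H : Subgroup G} (s : Set α) {g : G} (hg : g ∈ H) :
    g • stableCore H s = stableCore H s := by
  rw [stableCore, Set.smul_set_iInter]
  simp_rw [smul_smul]
  exact (mul_left_surjective (⟨g, hg⟩ : H)).iInter_comp fun h : H => (h : G) • s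

theorem stableCore_top (s : Set α) : stableCore (⊤ : Subgroup G) s = ⋂ g : G, g • s :=
  Subgroup.topEquiv.surjective.iInter_comp fun g : G => g • s

theorem iInter_smul_subset (s : Set α) : ⋂ g : G, g • s ⊆ s :=
  (Set.iInter_subset _ 1).trans (one_smul G s).subset

theorem smul_eq_of_forall_smul_subset {H : Subgroup G} {s : Set α}
    (h : ∀ g ∈ H, g • s ⊆ s) : ∀ g ∈ H, g • s = s := fun g hg =>
  (h g hg).antisymm <| by simpa using Set.smul_set_mono (a := g) (h g⁻¹ (inv_mem hg))

theorem smul_eq_of_smul_subset_of_pow_smul_eq {k : G} {s : Set α} {m : ℕ} (hm : 0 < m)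
    (hk : k • s ⊆ s) (hkm : k ^ m • s = s) : k • s = s := by
  have hpow : ∀ j : ℕ, k ^ j • s ⊆ s := by
    intro j
    induction j with
    | zero => rw [pow_zero, one_smul]
    | succ j ih => rw [pow_succ', mul_smul]; exact (Set.smul_set_mono ih).trans hk
  obtain ⟨j, rfl⟩ := Nat.exists_eq_succ_of_ne_zero hm.ne'
  refine hk.antisymm ?_
  calc s = k ^ (j + 1) • s := hkm.symm
    _ = k • k ^ j • s := by rw [pow_succ', mul_smul]
    _ ⊆ k • s := Set.smul_set_mono (hpow j)

theorem smul_stable_of_normal {N : Subgroup G} [hN : N.Normal] {s : Set α}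
    (hs : ∀ n ∈ N, n • s = s) (g : G) : ∀ n ∈ N, n • g • s = g • s := fun n hn =>
  calc n • g • s = g • (g⁻¹ * n * g) • s := by
        rw [smul_smul, smul_smul, ← mul_assoc, mul_inv_cancel_left]
    _ = g • s := by rw [hs _ (hN.conj_mem' n hn g)]

theorem MulAction.finite_orbit_of_le_stabilizer {N : Subgroup G} [N.FiniteIndex] {x : α}
    (h : N ≤ stabilizer G x) : (orbit G x).Finite := by
  have := Subgroup.finiteIndex_of_le h
  have : Finite (orbit G x) := .of_equiv _ (orbitEquivQuotientStabilizer G x).symm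
  exact Set.toFinite _

end Action

section Ring

variable {G R : Type*} [Group G] [Ring R] [MulSemiringAction G R]

def rightColon (I A : Set R) : Set R := {b | ∀ a ∈ A, a * b ∈ I}

theorem smul_rightColon_subset (g : G) (I A : Set R) :
    g • rightColon I A ⊆ rightColon (g • I) (g • A) := by
  rintro _ ⟨b, hb, rfl⟩ _ ⟨a, ha, rfl⟩
  rw [← smul_mul']
  exact Set.smul_mem_smul_set (hb a ha)

theorem smul_rightColon_eq_self {H : Subgroup G} {I A : Set R} (hI : ∀ g ∈ H, g • I = I)
    (hA : ∀ g ∈ H, g • A = A) : ∀ g ∈ H, g • rightColon I A = rightColon I A :=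
  smul_eq_of_forall_smul_subset fun g hg => by
    simpa only [hI g hg, hA g hg] using smul_rightColon_subset g I A

namespace IsTwoSidedIdealSet

theorem smul {s : Set R} (hs : IsTwoSidedIdealSet R s) (g : G) :
    IsTwoSidedIdealSet R (g • s) where
  zero_mem := ⟨0, hs.zero_mem, smul_zero g⟩
  add_mem := by
    rintro _ _ ⟨a, ha, rfl⟩ ⟨b, hb, rfl⟩
    exact ⟨a + b, hs.add_mem ha hb, smul_add g a b⟩
  neg_mem := by
    rintro _ ⟨a, ha, rfl⟩
    exact ⟨-a, hs.neg_mem ha, smul_neg g a⟩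
  mul_mem_left r := by
    rintro _ ⟨a, ha, rfl⟩
    exact ⟨g⁻¹ • r * a, hs.mul_mem_left _ ha, by simp only [smul_mul', smul_inv_smul]⟩
  mul_mem_right r := by
    rintro _ ⟨a, ha, rfl⟩
    exact ⟨a * g⁻¹ • r, hs.mul_mem_right _ ha, by simp only [smul_mul', smul_inv_smul]⟩

theorem iInter {ι : Sort*} {s : ι → Set R} (hs : ∀ i, IsTwoSidedIdealSet R (s i)) :
    IsTwoSidedIdealSet R (⋂ i, s i) where
  zero_mem := Set.mem_iInter.2 fun i => (hs i).zero_mem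
  add_mem _ _ ha hb := Set.mem_iInter.2 fun i =>
    (hs i).add_mem (Set.mem_iInter.1 ha i) (Set.mem_iInter.1 hb i)
  neg_mem _ ha := Set.mem_iInter.2 fun i => (hs i).neg_mem (Set.mem_iInter.1 ha i)
  mul_mem_left r _ ha := Set.mem_iInter.2 fun i => (hs i).mul_mem_left r (Set.mem_iInter.1 ha i)
  mul_mem_right r _ ha := Set.mem_iInter.2 fun i => (hs i).mul_mem_right r (Set.mem_iInter.1 ha i)

theorem stableCore {s : Set R} (hs : IsTwoSidedIdealSet R s) (H : Subgroup G) :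
    IsTwoSidedIdealSet R (stableCore H s) :=
  iInter fun h => hs.smul (h : G)

theorem rightColon {I A : Set R} (hI : IsTwoSidedIdealSet R I) (hA : IsTwoSidedIdealSet R A) :
    IsTwoSidedIdealSet R (rightColon I A) where
  zero_mem a _ := by rw [mul_zero]; exact hI.zero_mem
  add_mem _ _ hb hc a ha := by rw [mul_add]; exact hI.add_mem (hb a ha) (hc a ha)
  neg_mem _ hb a ha := by rw [mul_neg]; exact hI.neg_mem (hb a ha)
  mul_mem_left r _ hb a ha := by rw [← mul_assoc]; exact hb _ (hA.mul_mem_right r ha)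
  mul_mem_right r _ hb a ha := by rw [← mul_assoc]; exact hI.mul_mem_right r (hb a ha)

theorem eq_univ_of_one_mem {I : Set R} (hI : IsTwoSidedIdealSet R I) (h1 : (1 : R) ∈ I) :
    I = Set.univ :=
  Set.eq_univ_of_forall fun x => by simpa using hI.mul_mem_left x h1

theorem list_prod_mem {A : Set R} (hA : IsTwoSidedIdealSet R A) {L : List R} {a : R}
    (haL : a ∈ L) (ha : a ∈ A) : L.prod ∈ A := by
  induction L with
  | nil => cases haL
  | cons b L ih =>
    rw [List.prod_cons]
    rcases List.mem_cons.1 haL with rfl | haL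
    · exact hA.mul_mem_right _ ha
    · exact hA.mul_mem_left _ (ih haL)

end IsTwoSidedIdealSet

theorem IsPrimeTI.isSubgroupPrime_bot {P : Set R} (hP : IsPrimeTI R P) :
    IsSubgroupPrime R (⊥ : Subgroup G) P :=
  ⟨hP.1, hP.2.1, fun g hg => by rw [Subgroup.mem_bot.1 hg, one_smul],
    fun A B hA hB _ _ => hP.2.2 A B hA hB⟩

theorem isSubgroupPrime_top_iff {I : Set R} :
    IsSubgroupPrime R (⊤ : Subgroup G) I ↔ IsGPrime G R I := by
  simp only [IsSubgroupPrime, IsGPrime, Subgroup.mem_top, forall_const]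

namespace IsSubgroupPrime

variable {H : Subgroup G} {I : Set R}

theorem exists_subset_of_prod_mem (hI : IsSubgroupPrime R H I) :
    ∀ {n : ℕ} (As : Fin n → Set R), (∀ i, IsTwoSidedIdealSet R (As i)) →
      (∀ i, ∀ g ∈ H, g • As i = As i) →
      (∀ f : Fin n → R, (∀ i, f i ∈ As i) → (List.ofFn f).prod ∈ I) → ∃ i, As i ⊆ I
  | 0, _, _, _, hprod => (hI.2.1 <| hI.1.eq_univ_of_one_mem <| by
      simpa using hprod Fin.elim0 fun i => i.elim0).elim
  | n + 1, As, hAs, hAsH, hprod => by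
    -- `As 0 * rightColon I (As 0) ⊆ I`, and the product of the other factors lies in the colon.
    obtain h | h := hI.2.2.2 (As 0) (rightColon I (As 0)) (hAs 0) (hI.1.rightColon (hAs 0))
      (hAsH 0) (smul_rightColon_eq_self hI.2.2.1 (hAsH 0)) fun a ha b hb => hb a ha
    · exact ⟨0, h⟩
    · obtain ⟨i, hi⟩ := hI.exists_subset_of_prod_mem (fun i => As i.succ) (fun i => hAs _)
        (fun i => hAsH _) fun f hf => h fun a ha => by
          simpa using hprod (Fin.cons a f) (Fin.cases ha hf)
      exact ⟨i.succ, hi⟩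

theorem exists_mem_subset_of_sInter_subset (hI : IsSubgroupPrime R H I) {s : Set (Set R)}
    (hs : s.Finite) (hsI : ∀ A ∈ s, IsTwoSidedIdealSet R A) (hsH : ∀ A ∈ s, ∀ g ∈ H, g • A = A)
    (h : ⋂₀ s ⊆ I) : ∃ A ∈ s, A ⊆ I := by
  have := hs.to_subtype
  obtain ⟨n, ⟨e⟩⟩ := Finite.exists_equiv_fin s
  obtain ⟨i, hi⟩ := hI.exists_subset_of_prod_mem (fun i => e.symm i) (fun i => hsI _ (e.symm i).2)
    (fun i => hsH _ (e.symm i).2) fun f hf => h fun A hA =>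
      (hsI A hA).list_prod_mem ((List.mem_ofFn' f _).2 ⟨e ⟨A, hA⟩, rfl⟩)
        (by simpa using hf (e ⟨A, hA⟩))
  exact ⟨_, (e.symm i).2, hi⟩

theorem stableCore {K : Subgroup G} (hKH : K ≤ H) {Q : Set R} (hQ : IsSubgroupPrime R K Q) :
    IsSubgroupPrime R H (stableCore H Q) := by
  refine ⟨hQ.1.stableCore H, fun h => hQ.2.1 (Set.eq_univ_of_univ_subset ?_),
    fun g => smul_stableCore Q, fun A B hA hB hAH hBH hAB => ?_⟩
  · exact h ▸ stableCore_subset H Q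
  · refine (hQ.2.2.2 A B hA hB (fun g hg => hAH g (hKH hg)) (fun g hg => hBH g (hKH hg))
      fun a ha b hb => stableCore_subset H Q (hAB a ha b hb)).imp ?_ ?_
    exacts [subset_stableCore hAH, subset_stableCore hBH]

theorem exists_eq_stableCore {K : Subgroup G} (hKH : K ≤ H) (hI : IsSubgroupPrime R H I)
    {n : ℕ} {Ps : Fin n → Set R} (hPs : ∀ i, IsPrimeTI R (Ps i)) (hIPs : ∀ i, I ⊆ Ps i)
    (hprod : ∀ f : Fin n → R, (∀ i, f i ∈ Ps i) → (List.ofFn f).prod ∈ I) :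
    ∃ Q, IsSubgroupPrime R K Q ∧ I = _root_.stableCore H Q := by
  obtain ⟨i, hi⟩ := hI.exists_subset_of_prod_mem
    (fun i => _root_.stableCore H (_root_.stableCore K (Ps i)))
    (fun i => ((hPs i).1.stableCore K).stableCore H) (fun i g => smul_stableCore _)
    fun f hf => hprod f fun i =>
      ((stableCore_subset H _).trans (stableCore_subset K _)) (hf i)
  refine ⟨_, (hPs i).isSubgroupPrime_bot.stableCore bot_le, hi.antisymm' ?_⟩
  exact subset_stableCore hI.2.2.1 <|
    subset_stableCore (fun g hg => hI.2.2.1 g (hKH hg)) (hIPs i)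

theorem isGPrime_iInter_smul {N : Subgroup G} {Q : Set R} (hQ : IsSubgroupPrime R N Q) :
    IsGPrime G R (⋂ g : G, g • Q) := by
  rw [← stableCore_top, ← isSubgroupPrime_top_iff]
  exact hQ.stableCore le_top

section Normal

variable {N : Subgroup G} [N.Normal] [N.FiniteIndex] {Q Q₀ : Set R}

theorem exists_smul_subset (hQ : IsSubgroupPrime R N Q) (hQ₀ : IsTwoSidedIdealSet R Q₀)
    (hQ₀N : ∀ g ∈ N, g • Q₀ = Q₀) (h : ⋂ g : G, g • Q₀ ⊆ Q) : ∃ g : G, g • Q₀ ⊆ Q := by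
  obtain ⟨_, ⟨g, rfl⟩, hg⟩ := hQ.exists_mem_subset_of_sInter_subset
    (finite_orbit_of_le_stabilizer fun g hg => hQ₀N g hg)
    (by rintro _ ⟨g, rfl⟩; exact hQ₀.smul g)
    (by rintro _ ⟨g, rfl⟩; exact smul_stable_of_normal hQ₀N g)
    (by rwa [orbit, Set.sInter_range])
  exact ⟨g, hg⟩

theorem mem_orbit_of_iInter_smul_eq (hQ₀ : IsSubgroupPrime R N Q₀) (hQ : IsSubgroupPrime R N Q)
    (h : ⋂ g : G, g • Q₀ = ⋂ g : G, g • Q) : Q ∈ orbit G Q₀ := by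
  obtain ⟨g, hg⟩ := hQ.exists_smul_subset hQ₀.1 hQ₀.2.2.1 (h.subset.trans (iInter_smul_subset Q))
  obtain ⟨g', hg'⟩ :=
    hQ₀.exists_smul_subset hQ.1 hQ.2.2.1 (h.symm.subset.trans (iInter_smul_subset Q₀))
  have hk : (g' * g) • Q₀ ⊆ Q₀ := by
    rw [mul_smul]
    exact (Set.smul_set_mono hg).trans hg'
  have hkQ₀ : (g' * g) • Q₀ = Q₀ :=
    smul_eq_of_smul_subset_of_pow_smul_eq (Nat.pos_of_ne_zero Subgroup.FiniteIndex.index_ne_zero)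
      hk (hQ₀.2.2.1 _ (N.pow_index_mem _))
  have hg'Q : g' • Q = Q₀ := hg'.antisymm <|
    calc Q₀ = g' • g • Q₀ := by rw [← mul_smul, hkQ₀]
      _ ⊆ g' • Q := Set.smul_set_mono hg
  exact ⟨g'⁻¹, by rw [← hg'Q]; exact inv_smul_smul g' Q⟩

end Normal

end IsSubgroupPrime

end Ring

/-- let `N ⊴ G` be a normal subgroup of finite index, with `G`
acting by ring automorphisms on `R`, and suppose every two-sided ideal of `R`
contains a finite product of primes containing it.  Then every `G`-prime of `R`
is `⋂_{x ∈ G/N} x•Q = ⋂_{g ∈ G} g•Q` for some `N`-prime `Q`; conversely every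
such intersection is `G`-prime; and the set of `N`-primes is finite iff the set
of `G`-primes is finite. -/
theorem gPrime_iff_subgroupPrime {G R : Type*} [Group G] [Ring R]
    [MulSemiringAction G R] (N : Subgroup G) [N.Normal] [N.FiniteIndex]
    (hNoeth : ∀ A : Set R, IsTwoSidedIdealSet R A →
      ∃ (n : ℕ) (Ps : Fin n → Set R), (∀ i, IsPrimeTI R (Ps i)) ∧ (∀ i, A ⊆ Ps i) ∧
        ∀ f : Fin n → R, (∀ i, f i ∈ Ps i) → (List.ofFn f).prod ∈ A) :
    (∀ I : Set R, IsGPrime G R I →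
        ∃ Q : Set R, IsSubgroupPrime R N Q ∧ I = ⋂ g : G, g • Q) ∧
    (∀ Q : Set R, IsSubgroupPrime R N Q → IsGPrime G R (⋂ g : G, g • Q)) ∧
    ({I : Set R | IsSubgroupPrime R N I}.Finite ↔ {I : Set R | IsGPrime G R I}.Finite) := by
  have exists_eq_iInter : ∀ I : Set R, IsGPrime G R I →
      ∃ Q : Set R, IsSubgroupPrime R N Q ∧ I = ⋂ g : G, g • Q := fun I hI => by
    obtain ⟨n, Ps, hPs, hIPs, hprod⟩ := hNoeth I hI.1
    simpa only [stableCore_top] using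
      (isSubgroupPrime_top_iff.2 hI).exists_eq_stableCore le_top hPs hIPs hprod
  refine ⟨exists_eq_iInter, fun Q hQ => hQ.isGPrime_iInter_smul, fun hN => ?_, fun hG => ?_⟩
  · refine (hN.image fun Q => ⋂ g : G, g • Q).subset fun I hI => ?_
    obtain ⟨Q, hQ, rfl⟩ := exists_eq_iInter I hI
    exact ⟨Q, hQ, rfl⟩
  · refine .of_finite_fibers (fun Q => ⋂ g : G, g • Q)
      (hG.subset (Set.image_subset_iff.2 fun Q hQ => hQ.isGPrime_iInter_smul)) ?_
    rintro _ ⟨Q₀, hQ₀, rfl⟩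
    exact (finite_orbit_of_le_stabilizer fun g hg => hQ₀.2.2.1 g hg).subset
      fun Q ⟨hQ, hQQ₀⟩ => hQ₀.mem_orbit_of_iInter_smul_eq hQ hQQ₀.symm
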